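/- arXiv:0809.3653 — 2 statements merged into one kernel-verified Lean document; each statement's English description precedes it below -/
import Mathlib

section
/- For the tree T whose root ρ has a single leaf z attached by an edge of substitution probability p_z and the root y of a balanced binary tree T_Y of depth n (substitution probability q on every edge) attached by an edge of substitution probability p_y, with X = Y ∪ {z}, the reconstruction accuracy on all taxa equals RA(X) = (1−p_z)·[(1−p_y)·P_α(n,q) + p_y·P_β(n,q) + P_{αβ}(n,q)] + (1/2)·p_z·[(1−p_y)·P_α(n,q) + p_y·P_β(n,q)] + (1/2)·(1−p_z)·[p_y·P_α(n,q) + (1−p_y)·P_β(n,q)]. -/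
/-!
Model: rooted binary phylogenetic trees whose edges carry substitution
probabilities, evolving binary characters (states `true` = α, `false` = β)
under the two-state symmetric (Neyman) model, and Fitch's maximum parsimony
algorithm.
-/

/-- A rooted binary tree; an internal node records the substitution
probabilities on the edges to its two children. -/
inductive PTree where
  | leaf : PTree
  | node (p₁ p₂ : ℝ) (t₁ t₂ : PTree) : PTree

/-- The type of binary characters on a tree: an assignment of a state
(`true` = α, `false` = β) to each leaf. -/
def PTree.Char : PTree → Type
  | .leaf => Bool
  | .node _ _ t₁ t₂ => t₁.Char × t₂.Char

instance PTree.Char.instFintype : (t : PTree) → Fintype t.Char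
  | .leaf => inferInstanceAs (Fintype Bool)
  | .node _ _ t₁ t₂ =>
      letI := PTree.Char.instFintype t₁
      letI := PTree.Char.instFintype t₂
      inferInstanceAs (Fintype (_ × _))

instance PTree.Char.instDecidableEq : (t : PTree) → DecidableEq t.Char
  | .leaf => inferInstanceAs (DecidableEq Bool)
  | .node _ _ t₁ t₂ =>
      letI := PTree.Char.instDecidableEq t₁
      letI := PTree.Char.instDecidableEq t₂
      inferInstanceAs (DecidableEq (_ × _))

/-- Single-edge transition probability of the two-state symmetric model:
conditional on the parent being in state `s`, the child is in state `s'`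
with probability `1 - p` if `s' = s` and `p` otherwise. -/
def transProb (p : ℝ) (s s' : Bool) : ℝ := if s' = s then 1 - p else p

/-- `t.charProb s c` is the probability that the character `c` is generated
at the leaves of `t` conditional on the root of `t` being in state `s`
(substitutions happen independently across edges). -/
def PTree.charProb : (t : PTree) → Bool → t.Char → ℝ
  | .leaf, s, c => @ite _ (c = s) (instDecidableEqBool c s) 1 0
  | .node p₁ p₂ t₁ t₂, s, c =>
      (∑ s₁ : Bool, transProb p₁ s s₁ * t₁.charProb s₁ c.1) *
      (∑ s₂ : Bool, transProb p₂ s s₂ * t₂.charProb s₂ c.2)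

/-- The state set assigned to the root by Fitch's maximum parsimony
algorithm: a leaf in state `s` gets `{s}`; an internal node gets the
intersection of the children's state sets if nonempty, else their union. -/
def PTree.fitch : (t : PTree) → t.Char → Finset Bool
  | .leaf, c => {c}
  | .node _ _ t₁ t₂, c =>
      if (t₁.fitch c.1 ∩ t₂.fitch c.2).Nonempty then t₁.fitch c.1 ∩ t₂.fitch c.2
      else t₁.fitch c.1 ∪ t₂.fitch c.2

/-- `P_α`: probability, conditional on the root being in state α, that MP
returns the state set `{α}`. -/
noncomputable def PTree.probAlpha (t : PTree) : ℝ :=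
  ∑ c : t.Char, if t.fitch c = {true} then t.charProb true c else 0

/-- `P_β`: probability, conditional on the root being in state α, that MP
returns the state set `{β}`. -/
noncomputable def PTree.probBeta (t : PTree) : ℝ :=
  ∑ c : t.Char, if t.fitch c = {false} then t.charProb true c else 0

/-- `P_{αβ}`: probability, conditional on the root being in state α, that MP
returns the state set `{α, β}`. -/
noncomputable def PTree.probBoth (t : PTree) : ℝ :=
  ∑ c : t.Char, if t.fitch c = ({true, false} : Finset Bool) then t.charProb true c else 0

/-- The reconstruction accuracy `RA = UA + AA/2` of maximum parsimony on all
leaves of `t`, the conditioning root state being the root of `t` itself. -/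
noncomputable def PTree.RA (t : PTree) : ℝ := t.probAlpha + t.probBoth / 2

/-- Probability of the character `c` on `t` conditional on the state `s` of an
ancestor vertex joined to the root of `t` by an edge of substitution
probability `p`. -/
noncomputable def PTree.charProbVia (t : PTree) (p : ℝ) (s : Bool) (c : t.Char) : ℝ :=
  ∑ s' : Bool, transProb p s s' * t.charProb s' c

/-- Reconstruction accuracy of MP applied to the subtree `t` (rooted at `y`),
where the ancestral state being estimated is that of a vertex `ρ` joined to
`y` by an edge of substitution probability `p`:
`RA = P(MP = {α} | ρ = α) + (1/2)·P(MP = {α,β} | ρ = α)`. -/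
noncomputable def PTree.RAVia (t : PTree) (p : ℝ) : ℝ :=
  (∑ c : t.Char, if t.fitch c = {true} then t.charProbVia p true c else 0) +
  (∑ c : t.Char, if t.fitch c = ({true, false} : Finset Bool) then t.charProbVia p true c else 0) / 2

/-- All edge substitution probabilities lie in `[0, 1/2]`. -/
def PTree.valid : PTree → Prop
  | .leaf => True
  | .node p₁ p₂ t₁ t₂ => 0 ≤ p₁ ∧ p₁ ≤ 1/2 ∧ 0 ≤ p₂ ∧ p₂ ≤ 1/2 ∧ t₁.valid ∧ t₂.valid

/-- The list of net substitution probabilities from the root to each leaf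
(obtained by chaining the single-edge substitution probabilities). -/
def PTree.leafFlipProbs : PTree → List ℝ
  | .leaf => [0]
  | .node p₁ p₂ t₁ t₂ =>
      (t₁.leafFlipProbs.map fun r => (1 - p₁) * r + p₁ * (1 - r)) ++
      (t₂.leafFlipProbs.map fun r => (1 - p₂) * r + p₂ * (1 - r))

/-- The balanced binary tree of depth `n` with substitution probability `q`
on every edge. -/
def balanced (q : ℝ) : ℕ → PTree
  | 0 => .leaf
  | n + 1 => .node q q (balanced q n) (balanced q n)

/-- `P_α(n,q)` for the balanced tree of depth `n`. -/
noncomputable def Palpha (n : ℕ) (q : ℝ) : ℝ := (balanced q n).probAlpha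

/-- `P_β(n,q)` for the balanced tree of depth `n`. -/
noncomputable def Pbeta (n : ℕ) (q : ℝ) : ℝ := (balanced q n).probBeta

/-- `P_{αβ}(n,q)` for the balanced tree of depth `n`. -/
noncomputable def Palphabeta (n : ℕ) (q : ℝ) : ℝ := (balanced q n).probBoth

/-!
The root state set of the tree is `{z}` when the leaf state `z` lies in the Fitch set `S` of the
subtree, and `{z} ∪ S` otherwise; `S` is one of `{α}`, `{β}`, `{α, β}`. Hence the accuracy splits
over the two leaf states and three subtree outcomes, each weighted by `P(z) · P(S | ρ = α)`.
Conditioning through the edge `ρ y` mixes the root states of `T_Y`, and the symmetry of the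
model under exchanging `α` and `β` turns probabilities given `y = β` into ones given `y = α`.
-/

def fitchStep {α : Type*} [DecidableEq α] (S₁ S₂ : Finset α) : Finset α :=
  if (S₁ ∩ S₂).Nonempty then S₁ ∩ S₂ else S₁ ∪ S₂

theorem fitchStep_nonempty {α : Type*} [DecidableEq α] {S₁ : Finset α} (S₂ : Finset α)
    (h : S₁.Nonempty) : (fitchStep S₁ S₂).Nonempty := by
  unfold fitchStep
  split_ifs with h'
  · exact h'
  · exact h.mono Finset.subset_union_left

theorem fitchStep_image {α β : Type*} [DecidableEq α] [DecidableEq β] {f : α → β}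
    (hf : Function.Injective f) (S₁ S₂ : Finset α) :
    fitchStep (S₁.image f) (S₂.image f) = (fitchStep S₁ S₂).image f := by
  simp only [fitchStep, ← Finset.image_inter _ _ hf, ← Finset.image_union, Finset.image_nonempty]
  split_ifs <;> rfl

namespace PTree

def flip : (t : PTree) → t.Char → t.Char
  | .leaf, c => !c
  | .node _ _ t₁ t₂, c => (t₁.flip c.1, t₂.flip c.2)

theorem flip_involutive : (t : PTree) → Function.Involutive t.flip
  | .leaf, c => Bool.not_not c
  | .node _ _ t₁ t₂, c => Prod.ext (flip_involutive t₁ c.1) (flip_involutive t₂ c.2)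

theorem sum_transProb_not (p : ℝ) (s : Bool) (f g : Bool → ℝ) (h : ∀ b, g (!b) = f b) :
    ∑ s' : Bool, transProb p (!s) s' * g s' = ∑ s' : Bool, transProb p s s' * f s' := by
  simp only [Fintype.sum_bool, ← h true, ← h false, Bool.not_true, Bool.not_false]
  cases s <;> simp only [transProb] <;> norm_num <;> ring

theorem charProb_flip : (t : PTree) → ∀ s c, t.charProb (!s) (t.flip c) = t.charProb s c
  | .leaf, s, c => by cases s <;> cases c <;> rfl
  | .node p₁ p₂ t₁ t₂, s, c =>
      congrArg₂ (· * ·) (sum_transProb_not p₁ s _ _ (charProb_flip t₁ · c.1))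
        (sum_transProb_not p₂ s _ _ (charProb_flip t₂ · c.2))

theorem fitch_node (p₁ p₂ : ℝ) (t₁ t₂ : PTree) (c : (node p₁ p₂ t₁ t₂).Char) :
    (node p₁ p₂ t₁ t₂).fitch c = fitchStep (t₁.fitch c.1) (t₂.fitch c.2) :=
  rfl

theorem fitch_flip : (t : PTree) → ∀ c, t.fitch (t.flip c) = (t.fitch c).image Bool.not
  | .leaf, c => by cases c <;> rfl
  | .node p₁ p₂ t₁ t₂, c => by
      rw [fitch_node, fitch_node]
      simp only [flip, fitch_flip t₁ c.1, fitch_flip t₂ c.2, fitchStep_image Bool.not_injective]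

theorem fitch_nonempty : (t : PTree) → ∀ c, (t.fitch c).Nonempty
  | .leaf, c => Finset.singleton_nonempty c
  | .node _ _ t₁ _, c => fitchStep_nonempty _ (fitch_nonempty t₁ c.1)

theorem fitch_cases (t : PTree) (c : t.Char) :
    t.fitch c = {true} ∨ t.fitch c = {false} ∨ t.fitch c = {true, false} := by
  have key : ∀ F : Finset Bool, F.Nonempty → F = {true} ∨ F = {false} ∨ F = {true, false} := by
    decide
  exact key _ (t.fitch_nonempty c)

noncomputable def probFitch (t : PTree) (s : Bool) (F : Finset Bool) : ℝ :=
  ∑ c : t.Char, if t.fitch c = F then t.charProb s c else 0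

theorem probFitch_not (t : PTree) (s : Bool) (F : Finset Bool) :
    t.probFitch (!s) (F.image Bool.not) = t.probFitch s F := by
  refine (Fintype.sum_bijective t.flip t.flip_involutive.bijective _ _ fun c => ?_).symm
  simp only [fitch_flip, charProb_flip, (Finset.image_injective Bool.not_injective).eq_iff]

theorem probFitch_false_singleton_true (t : PTree) : t.probFitch false {true} = t.probBeta :=
  t.probFitch_not true {false}

theorem probFitch_false_singleton_false (t : PTree) : t.probFitch false {false} = t.probAlpha :=
  t.probFitch_not true {true}

theorem probFitch_false_pair (t : PTree) : t.probFitch false {true, false} = t.probBoth := by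
  have h : ({true, false} : Finset Bool).image Bool.not = {true, false} := by decide
  show _ = t.probFitch true {true, false}
  rw [← t.probFitch_not true, h]
  rfl

theorem sum_mul_fitch (t : PTree) (φ : Finset Bool → ℝ) (w : t.Char → ℝ) :
    ∑ c : t.Char, φ (t.fitch c) * w c =
      φ {true} * (∑ c : t.Char, if t.fitch c = {true} then w c else 0) +
      φ {false} * (∑ c : t.Char, if t.fitch c = {false} then w c else 0) +
      φ {true, false} * (∑ c : t.Char, if t.fitch c = {true, false} then w c else 0) := by
  simp only [Finset.mul_sum, ← Finset.sum_add_distrib]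
  refine Finset.sum_congr rfl fun c _ => ?_
  rcases t.fitch_cases c with h | h | h <;> simp +decide [h]

theorem sum_ite_fitch_charProbVia (t : PTree) (p : ℝ) (F : Finset Bool) :
    (∑ c : t.Char, if t.fitch c = F then t.charProbVia p true c else 0) =
      (1 - p) * t.probFitch true F + p * t.probFitch false F := by
  simp only [probFitch, Finset.mul_sum, ← Finset.sum_add_distrib]
  refine Finset.sum_congr rfl fun c _ => ?_
  split_ifs <;> simp [charProbVia, transProb]

noncomputable def raScore (F : Finset Bool) : ℝ :=
  if F = {true} then 1 else if F = {true, false} then 1 / 2 else 0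

theorem RA_eq_sum_raScore (t : PTree) :
    t.RA = ∑ c : t.Char, raScore (t.fitch c) * t.charProb true c := by
  rw [sum_mul_fitch]
  simp +decide only [raScore, RA, probAlpha, probBoth, if_true, if_false]
  ring

theorem sum_char_node (p₁ p₂ : ℝ) (t₁ t₂ : PTree) (f : (node p₁ p₂ t₁ t₂).Char → ℝ) :
    ∑ c : (node p₁ p₂ t₁ t₂).Char, f c = ∑ c₁ : t₁.Char, ∑ c₂ : t₂.Char, f (c₁, c₂) := by
  let := Char.instFintype t₁
  let := Char.instFintype t₂
  exact Fintype.sum_prod_type (f := fun x : t₁.Char × t₂.Char => f x)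

theorem sum_char_node_leaf (p₁ p₂ : ℝ) (t : PTree) (f : (node p₁ p₂ leaf t).Char → ℝ) :
    ∑ c : (node p₁ p₂ leaf t).Char, f c = ∑ c : t.Char, (f (true, c) + f (false, c)) := by
  rw [sum_char_node, Finset.sum_comm]
  exact Finset.sum_congr rfl fun c _ => Fintype.sum_bool _

theorem fitch_node_leaf (p₁ p₂ : ℝ) (t : PTree) (b : Bool) (c : t.Char) :
    (node p₁ p₂ leaf t).fitch (b, c) = fitchStep {b} (t.fitch c) :=
  rfl

theorem charProb_node_leaf (p₁ p₂ : ℝ) (t : PTree) (s b : Bool) (c : t.Char) :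
    (node p₁ p₂ leaf t).charProb s (b, c) = transProb p₁ s b * t.charProbVia p₂ s c := by
  show (∑ s₁ : Bool, transProb p₁ s s₁ * if b = s₁ then 1 else 0) * t.charProbVia p₂ s c = _
  cases b <;> simp

theorem RA_node_leaf (p₁ p₂ : ℝ) (t : PTree) :
    (node p₁ p₂ leaf t).RA =
      (1 - p₁) * ((1 - p₂) * t.probAlpha + p₂ * t.probBeta + t.probBoth)
      + (1/2) * p₁ * ((1 - p₂) * t.probAlpha + p₂ * t.probBeta)
      + (1/2) * (1 - p₁) * (p₂ * t.probAlpha + (1 - p₂) * t.probBeta) := by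
  rw [RA_eq_sum_raScore, sum_char_node_leaf]
  simp only [fitch_node_leaf, charProb_node_leaf, mul_left_comm _ (transProb _ _ _),
    Finset.sum_add_distrib, ← Finset.mul_sum]
  rw [sum_mul_fitch t (fun F => raScore (fitchStep {true} F)),
    sum_mul_fitch t (fun F => raScore (fitchStep {false} F))]
  simp only [sum_ite_fitch_charProbVia, probFitch_false_singleton_true,
    probFitch_false_singleton_false, probFitch_false_pair]
  have hα : t.probFitch true {true} = t.probAlpha := rfl
  have hβ : t.probFitch true {false} = t.probBeta := rfl
  have hαβ : t.probFitch true {true, false} = t.probBoth := rfl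
  simp +decide only [raScore, transProb, hα, hβ, hαβ, if_true, if_false]
  ring

end PTree

theorem stmt4_general (n : ℕ) (q pz py : ℝ) :
    (PTree.node pz py PTree.leaf (balanced q n)).RA =
      (1 - pz) * ((1 - py) * Palpha n q + py * Pbeta n q + Palphabeta n q)
      + (1/2) * pz * ((1 - py) * Palpha n q + py * Pbeta n q)
      + (1/2) * (1 - pz) * (py * Palpha n q + (1 - py) * Pbeta n q) :=
  PTree.RA_node_leaf pz py (balanced q n)

/-- for the tree whose root has a single leaf `z` (edge
probability `p_z`) and the balanced tree of depth `n` with probability `q` on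
every edge (attached by an edge of probability `p_y`), the reconstruction
accuracy on the full leaf set `X` is given by the stated formula. -/
theorem stmt4 (n : ℕ) (q pz py : ℝ)
    (hq : 0 ≤ q ∧ q ≤ 1/2) (hz : 0 ≤ pz ∧ pz ≤ 1/2) (hy : 0 ≤ py ∧ py ≤ 1/2) :
    (PTree.node pz py PTree.leaf (balanced q n)).RA =
      (1 - pz) * ((1 - py) * Palpha n q + py * Pbeta n q + Palphabeta n q)
      + (1/2) * pz * ((1 - py) * Palpha n q + py * Pbeta n q)
      + (1/2) * (1 - pz) * (py * Palpha n q + (1 - py) * Pbeta n q) :=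
  stmt4_general n q pz py
end

section
/- There is no general improvement from a single taxon under a molecular clock: for any rooted binary phylogenetic tree T with leaf set X evolving under the two-state symmetric model and satisfying a molecular clock (the net substitution probability from the root to every leaf equals the same value p), the reconstruction accuracy of Fitch's maximum parsimony on all taxa satisfies RA(X) ≥ 1 − p. -/
/-!
Write `D = P_α - P_β`. Every Fitch set is `{α}`, `{β}` or `{α, β}`, so `RA = (1 + D) / 2` and it
suffices to show `D ≥ 1 - 2p`. By the `α ↔ β` symmetry of the model, the probability of `{α}`
minus that of `{β}`, seen from a parent across an edge with substitution probability `q`, is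
`(1 - 2q) · D` of the subtree. Fitch's rule at a node with children `1, 2` gives
`D = ((x₁ - y₁)(1 + z₂) + (x₂ - y₂)(1 + z₁)) / 2`, where `xᵢ - yᵢ` is that difference for child `i`
and `zᵢ ≥ 0` the probability of `{α, β}`. By induction, `D ≥ 1 - 2r` where `r` is the largest net
substitution probability to a leaf, and under the clock `r = p`.
-/

namespace PTree

def fitchCombine (A B : Finset Bool) : Finset Bool :=
  if (A ∩ B).Nonempty then A ∩ B else A ∪ B

theorem fitchCombine_image_not (A B : Finset Bool) :
    fitchCombine (A.image (!·)) (B.image (!·)) = (fitchCombine A B).image (!·) := by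
  revert A B; decide

def fitchSets : Finset (Finset Bool) := {{true}, {false}, {true, false}}

theorem sum_fitchSets {M : Type*} [AddCommMonoid M] (f : Finset Bool → M) :
    ∑ A ∈ fitchSets, f A = f {true} + f {false} + f {true, false} := by
  rw [fitchSets, Finset.sum_insert (by decide), Finset.sum_insert (by decide),
    Finset.sum_singleton, add_assoc]

theorem fitchCombine_mem_fitchSets :
    ∀ A ∈ fitchSets, ∀ B ∈ fitchSets, fitchCombine A B ∈ fitchSets := by
  decide

theorem fitch_mem_fitchSets : ∀ (t : PTree) (c : t.Char), t.fitch c ∈ fitchSets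
  | .leaf, c => by cases c <;> decide
  | .node _ _ t₁ t₂, c =>
      fitchCombine_mem_fitchSets _ (fitch_mem_fitchSets t₁ c.1) _ (fitch_mem_fitchSets t₂ c.2)

def flipChar : (t : PTree) → t.Char → t.Char
  | .leaf, c => !c
  | .node _ _ t₁ t₂, c => (t₁.flipChar c.1, t₂.flipChar c.2)

theorem flipChar_involutive : ∀ t : PTree, Function.Involutive t.flipChar
  | .leaf, c => Bool.not_not c
  | .node _ _ t₁ t₂, c => Prod.ext (flipChar_involutive t₁ c.1) (flipChar_involutive t₂ c.2)

theorem fitch_flipChar : ∀ (t : PTree) (c : t.Char),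
    t.fitch (t.flipChar c) = (t.fitch c).image (!·)
  | .leaf, c => by cases c <;> rfl
  | .node _ _ t₁ t₂, c =>
      (congrArg₂ fitchCombine (fitch_flipChar t₁ c.1) (fitch_flipChar t₂ c.2)).trans
        (fitchCombine_image_not _ _)

theorem charProb_flipChar : ∀ (t : PTree) (s : Bool) (c : t.Char),
    t.charProb s (t.flipChar c) = t.charProb (!s) c
  | .leaf, s, c => by cases s <;> cases c <;> rfl
  | .node p₁ p₂ t₁ t₂, s, c => by
      simp only [charProb, flipChar, Fintype.sum_bool, charProb_flipChar t₁, charProb_flipChar t₂]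
      cases s <;> simp only [transProb] <;> norm_num <;> ring

theorem charProb_node (p₁ p₂ : ℝ) (t₁ t₂ : PTree) (s : Bool) (c : (node p₁ p₂ t₁ t₂).Char) :
    (node p₁ p₂ t₁ t₂).charProb s c = t₁.charProbVia p₁ s c.1 * t₂.charProbVia p₂ s c.2 := rfl

theorem charProb_leaf (s c : Bool) : leaf.charProb s c = if c = s then 1 else 0 := by
  simp only [charProb]; split_ifs <;> rfl

theorem charProb_nonneg : ∀ (t : PTree), t.valid → ∀ (s : Bool) (c : t.Char), 0 ≤ t.charProb s c
  | .leaf, _, s, c => (charProb_leaf s c).symm ▸ by positivity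
  | .node p₁ p₂ t₁ t₂, ⟨hp₁, hp₁', hp₂, hp₂', hv₁, hv₂⟩, s, c => by
      have htrans {p : ℝ} (hp : 0 ≤ p) (hp' : p ≤ 1 / 2) (s s' : Bool) :
          0 ≤ transProb p s s' := by
        unfold transProb; split <;> linarith
      exact mul_nonneg
        (Finset.sum_nonneg fun s₁ _ =>
          mul_nonneg (htrans hp₁ hp₁' _ _) (charProb_nonneg t₁ hv₁ s₁ _))
        (Finset.sum_nonneg fun s₂ _ =>
          mul_nonneg (htrans hp₂ hp₂' _ _) (charProb_nonneg t₂ hv₂ s₂ _))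

theorem sum_charProbVia (t : PTree) (p : ℝ) (s : Bool)
    (h : ∀ s', ∑ c, t.charProb s' c = 1) : ∑ c, t.charProbVia p s c = 1 := by
  simp only [charProbVia]
  rw [Finset.sum_comm]
  simp only [← Finset.mul_sum, h, mul_one, Fintype.sum_bool, transProb]
  cases s <;> simp

theorem sum_charProb : ∀ (t : PTree) (s : Bool), ∑ c, t.charProb s c = 1
  | .leaf, s => by
      show ∑ c : Bool, leaf.charProb s c = 1
      cases s <;> simp [charProb_leaf]
  | .node p₁ p₂ t₁ t₂, s => by
      simp only [charProb_node]
      erw [Fintype.sum_prod_type]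
      rw [← Finset.sum_mul_sum, sum_charProbVia t₁ p₁ s (sum_charProb t₁),
        sum_charProbVia t₂ p₂ s (sum_charProb t₂), one_mul]

noncomputable def fitchMass (t : PTree) (w : t.Char → ℝ) (A : Finset Bool) : ℝ :=
  ∑ c, if t.fitch c = A then w c else 0

theorem sum_mul_fitch_s8 (t : PTree) (w : t.Char → ℝ) (f : Finset Bool → ℝ) :
    ∑ c, f (t.fitch c) * w c = ∑ A ∈ fitchSets, f A * t.fitchMass w A := by
  simp only [fitchMass, Finset.mul_sum, mul_ite, mul_zero]
  rw [Finset.sum_comm]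
  refine Finset.sum_congr rfl fun c _ => ?_
  rw [Finset.sum_ite_eq, if_pos (fitch_mem_fitchSets t c)]

theorem sum_fitchMass (t : PTree) (w : t.Char → ℝ) :
    ∑ A ∈ fitchSets, t.fitchMass w A = ∑ c, w c := by
  simpa using (sum_mul_fitch_s8 t w 1).symm

theorem fitchMass_node (p₁ p₂ : ℝ) (t₁ t₂ : PTree) (w₁ : t₁.Char → ℝ) (w₂ : t₂.Char → ℝ)
    (S : Finset Bool) :
    (node p₁ p₂ t₁ t₂).fitchMass (fun c => w₁ c.1 * w₂ c.2) S =
      ∑ A ∈ fitchSets, ∑ B ∈ fitchSets,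
        if fitchCombine A B = S then t₁.fitchMass w₁ A * t₂.fitchMass w₂ B else 0 := by
  have hinner (c₁ : t₁.Char) :
      (∑ c₂, if fitchCombine (t₁.fitch c₁) (t₂.fitch c₂) = S then w₁ c₁ * w₂ c₂ else 0) =
        (∑ B ∈ fitchSets, (if fitchCombine (t₁.fitch c₁) B = S then 1 else 0) *
          t₂.fitchMass w₂ B) * w₁ c₁ := by
    rw [← sum_mul_fitch_s8, Finset.sum_mul]
    refine Finset.sum_congr rfl fun c₂ _ => ?_
    split_ifs <;> ring
  change (∑ c : t₁.Char × t₂.Char,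
    if fitchCombine (t₁.fitch c.1) (t₂.fitch c.2) = S then w₁ c.1 * w₂ c.2 else 0) = _
  rw [Fintype.sum_prod_type]
  simp only [hinner]
  rw [sum_mul_fitch_s8 t₁ w₁
    fun A => ∑ B ∈ fitchSets, (if fitchCombine A B = S then 1 else 0) * t₂.fitchMass w₂ B]
  simp only [Finset.sum_mul]
  refine Finset.sum_congr rfl fun A _ => Finset.sum_congr rfl fun B _ => ?_
  split_ifs <;> ring

theorem fitchMass_charProb_not (t : PTree) (s : Bool) (A : Finset Bool) :
    t.fitchMass (t.charProb (!s)) A = t.fitchMass (t.charProb s) (A.image (!·)) := by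
  have himage : ∀ A B : Finset Bool, B.image (!·) = A ↔ B = A.image (!·) := by decide
  unfold fitchMass
  rw [← Equiv.sum_comp (Function.Involutive.toPerm _ (flipChar_involutive t))]
  simp only [Function.Involutive.coe_toPerm, fitch_flipChar, charProb_flipChar, Bool.not_not,
    himage]

theorem probAlpha_eq_fitchMass (t : PTree) : t.probAlpha = t.fitchMass (t.charProb true) {true} :=
  rfl

theorem probBeta_eq_fitchMass (t : PTree) : t.probBeta = t.fitchMass (t.charProb true) {false} :=
  rfl

noncomputable def fitchProbVia (t : PTree) (p : ℝ) (A : Finset Bool) : ℝ :=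
  t.fitchMass (t.charProbVia p true) A

theorem fitchProbVia_eq (t : PTree) (p : ℝ) (A : Finset Bool) :
    t.fitchProbVia p A =
      (1 - p) * t.fitchMass (t.charProb true) A + p * t.fitchMass (t.charProb false) A := by
  simp only [fitchProbVia, fitchMass, Finset.mul_sum, ← Finset.sum_add_distrib]
  refine Finset.sum_congr rfl fun c _ => ?_
  split_ifs <;> simp [charProbVia, transProb]

theorem fitchProbVia_true_sub_false (t : PTree) (p : ℝ) :
    t.fitchProbVia p {true} - t.fitchProbVia p {false} =
      (1 - 2 * p) * (t.probAlpha - t.probBeta) := by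
  have hβ : t.fitchMass (t.charProb false) {true} = t.probBeta := by
    simpa [probBeta_eq_fitchMass] using fitchMass_charProb_not t true {true}
  have hα : t.fitchMass (t.charProb false) {false} = t.probAlpha := by
    simpa [probAlpha_eq_fitchMass] using fitchMass_charProb_not t true {false}
  rw [fitchProbVia_eq, fitchProbVia_eq, hβ, hα, ← probAlpha_eq_fitchMass,
    ← probBeta_eq_fitchMass]
  ring

theorem fitchProbVia_nonneg (t : PTree) (hv : t.valid) {p : ℝ} (hp : 0 ≤ p) (hp' : p ≤ 1)
    (A : Finset Bool) : 0 ≤ t.fitchProbVia p A := by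
  have hmass (s : Bool) : 0 ≤ t.fitchMass (t.charProb s) A :=
    Finset.sum_nonneg fun c _ => ite_nonneg (charProb_nonneg t hv s c) le_rfl
  rw [fitchProbVia_eq]
  have := hmass true
  have := hmass false
  nlinarith

theorem fitchProbVia_total (t : PTree) (p : ℝ) :
    t.fitchProbVia p {true} + t.fitchProbVia p {false} + t.fitchProbVia p {true, false} = 1 := by
  rw [← sum_fitchSets]
  exact (sum_fitchMass _ _).trans (sum_charProbVia t p true (sum_charProb t))

theorem probAlpha_add_probBeta_add_probBoth (t : PTree) :
    t.probAlpha + t.probBeta + t.probBoth = 1 := by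
  rw [← sum_charProb t true, ← sum_fitchMass, sum_fitchSets]
  rfl

theorem fitchMass_charProb_node (p₁ p₂ : ℝ) (t₁ t₂ : PTree) (S : Finset Bool) :
    (node p₁ p₂ t₁ t₂).fitchMass ((node p₁ p₂ t₁ t₂).charProb true) S =
      ∑ A ∈ fitchSets, ∑ B ∈ fitchSets,
        if fitchCombine A B = S then t₁.fitchProbVia p₁ A * t₂.fitchProbVia p₂ B else 0 :=
  fitchMass_node p₁ p₂ t₁ t₂ (t₁.charProbVia p₁ true) (t₂.charProbVia p₂ true) S

theorem probAlpha_node (p₁ p₂ : ℝ) (t₁ t₂ : PTree) :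
    (node p₁ p₂ t₁ t₂).probAlpha =
      t₁.fitchProbVia p₁ {true} * t₂.fitchProbVia p₂ {true} +
      t₁.fitchProbVia p₁ {true} * t₂.fitchProbVia p₂ {true, false} +
      t₁.fitchProbVia p₁ {true, false} * t₂.fitchProbVia p₂ {true} := by
  rw [probAlpha_eq_fitchMass, fitchMass_charProb_node]
  simp +decide only [sum_fitchSets, if_true, if_false, add_zero]

theorem probBeta_node (p₁ p₂ : ℝ) (t₁ t₂ : PTree) :
    (node p₁ p₂ t₁ t₂).probBeta =
      t₁.fitchProbVia p₁ {false} * t₂.fitchProbVia p₂ {false} +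
      t₁.fitchProbVia p₁ {false} * t₂.fitchProbVia p₂ {true, false} +
      t₁.fitchProbVia p₁ {true, false} * t₂.fitchProbVia p₂ {false} := by
  rw [probBeta_eq_fitchMass, fitchMass_charProb_node]
  simp +decide only [sum_fitchSets, if_true, if_false, add_zero, zero_add]

theorem probAlpha_sub_probBeta_node (p₁ p₂ : ℝ) (t₁ t₂ : PTree) :
    (node p₁ p₂ t₁ t₂).probAlpha - (node p₁ p₂ t₁ t₂).probBeta =
      ((t₁.fitchProbVia p₁ {true} - t₁.fitchProbVia p₁ {false}) *
          (1 + t₂.fitchProbVia p₂ {true, false}) +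
        (t₂.fitchProbVia p₂ {true} - t₂.fitchProbVia p₂ {false}) *
          (1 + t₁.fitchProbVia p₁ {true, false})) / 2 := by
  rw [probAlpha_node, probBeta_node]
  linear_combination
    (t₂.fitchProbVia p₂ {true} - t₂.fitchProbVia p₂ {false}) / 2 * fitchProbVia_total t₁ p₁ +
    (t₁.fitchProbVia p₁ {true} - t₁.fitchProbVia p₁ {false}) / 2 * fitchProbVia_total t₂ p₂

theorem probAlpha_sub_probBeta_leaf : leaf.probAlpha - leaf.probBeta = 1 := by
  change (∑ c : Bool, if ({c} : Finset Bool) = {true} then leaf.charProb true c else 0) -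
    (∑ c : Bool, if ({c} : Finset Bool) = {false} then leaf.charProb true c else 0) = 1
  simp [charProb_leaf]

/-- The factor `a` stands for `∏ (1 - 2 p_e)` over the edges above `t`, so that `a * (1 - 2 r)`
is `1 - 2 ×` the net substitution probability to a leaf of `t` seen from the root of the whole
tree. -/
theorem le_mul_probAlpha_sub_probBeta : ∀ (t : PTree), t.valid → ∀ {a δ : ℝ}, 0 ≤ a → 0 ≤ δ →
    (∀ r ∈ t.leafFlipProbs, δ ≤ a * (1 - 2 * r)) → δ ≤ a * (t.probAlpha - t.probBeta)
  | .leaf, _, a, δ, _, _, h => by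
      simpa [probAlpha_sub_probBeta_leaf] using h 0 (by simp [leafFlipProbs])
  | .node p₁ p₂ t₁ t₂, ⟨hp₁, hp₁', hp₂, hp₂', hv₁, hv₂⟩, a, δ, ha, hδ, h => by
      have h₁ : δ ≤ a * (1 - 2 * p₁) * (t₁.probAlpha - t₁.probBeta) :=
        le_mul_probAlpha_sub_probBeta t₁ hv₁ (by nlinarith) hδ fun r hr =>
          (h _ (List.mem_append_left _ (List.mem_map_of_mem hr))).trans_eq (by ring)
      have h₂ : δ ≤ a * (1 - 2 * p₂) * (t₂.probAlpha - t₂.probBeta) :=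
        le_mul_probAlpha_sub_probBeta t₂ hv₂ (by nlinarith) hδ fun r hr =>
          (h _ (List.mem_append_right _ (List.mem_map_of_mem hr))).trans_eq (by ring)
      rw [mul_assoc, ← fitchProbVia_true_sub_false] at h₁ h₂
      have hz₁ := fitchProbVia_nonneg t₁ hv₁ hp₁ (by linarith) {true, false}
      have hz₂ := fitchProbVia_nonneg t₂ hv₂ hp₂ (by linarith) {true, false}
      rw [probAlpha_sub_probBeta_node]
      nlinarith

theorem leafFlipProbs_ne_nil : ∀ t : PTree, t.leafFlipProbs ≠ []
  | .leaf => List.cons_ne_nil _ _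
  | .node _ _ t₁ _ => by simp [leafFlipProbs, leafFlipProbs_ne_nil t₁]

theorem leafFlipProbs_le_half : ∀ (t : PTree), t.valid → ∀ r ∈ t.leafFlipProbs, r ≤ 1 / 2
  | .leaf, _, r, hr => by simp_all [leafFlipProbs]
  | .node p₁ p₂ t₁ t₂, ⟨_, hp₁, _, hp₂, hv₁, hv₂⟩, r, hr => by
      simp only [leafFlipProbs, List.mem_append, List.mem_map] at hr
      rcases hr with ⟨r, hr, rfl⟩ | ⟨r, hr, rfl⟩
      · nlinarith [leafFlipProbs_le_half t₁ hv₁ r hr]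
      · nlinarith [leafFlipProbs_le_half t₂ hv₂ r hr]

end PTree

/-- for any rooted binary phylogenetic tree evolving under the
two-state symmetric model and satisfying a molecular clock (the net
substitution probability from the root to every leaf equals the same value
`p`), the reconstruction accuracy of Fitch's maximum parsimony on all taxa
satisfies `RA(X) ≥ 1 − p`. -/
theorem stmt8 (t : PTree) (hv : t.valid) (p : ℝ)
    (hclock : ∀ r ∈ t.leafFlipProbs, r = p) :
    t.RA ≥ 1 - p := by
  obtain ⟨r, hr⟩ := List.exists_mem_of_ne_nil _ t.leafFlipProbs_ne_nil
  have hp : p ≤ 1 / 2 := hclock r hr ▸ t.leafFlipProbs_le_half hv r hr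
  have hD := t.le_mul_probAlpha_sub_probBeta hv zero_le_one (δ := 1 - 2 * p) (by linarith)
    fun r hr => by rw [hclock r hr, one_mul]
  have htotal := t.probAlpha_add_probBeta_add_probBoth
  unfold PTree.RA
  linarith
end
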